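/- Let V be a finite set, s ∈ V, and let v : V → ℝ and d : V → ℝ be functions with d_x > 0 for all x, v_s = R_s > 0, and set ET_s := (1/R_s) Σ_{x∈V} v_x² d_x. Fix η ≥ 1 and define the modified quantities: R̂_σ := R_s + 1/(η d_s), d̂_σ := η d_s, d̂_s := (1+η) d_s, d̂_x := d_x for x ∉ {s}, v̂_σ := R̂_σ, v̂_x := v_x for x ∈ V, and ÊT_σ := (1/R̂_σ)( v̂_σ² d̂_σ + Σ_{x∈V} v̂_x² d̂_x ). Then R̂_σ d̂_σ = 1 + η R_s d_s and ÊT_σ/(R̂_σ d̂_σ) ≤ 2 + ET_s/(η R_s d_s). -/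

import Mathlib

/-!
Attaching `σ` adds the term `η d_s R_s²` to the sum over `V` and the term `R̂_σ² η d_s` for `σ`
itself, so `ÊT_σ / (R̂_σ d̂_σ) = 1 + (R_s / R̂_σ)² + Σ_x v_x² d_x / (η d_s R̂_σ²)`.
Since `R_s ≤ R̂_σ`, the middle term is at most `1` and the last at most `ET_s / (η R_s d_s)`.
-/

open Finset

lemma sum_mul_ite_one_add_mul {V K : Type*} [Fintype V] [DecidableEq V] [CommSemiring K]
    (f w : V → K) (s : V) (η : K) :
    ∑ x, f x * (if x = s then (1 + η) * w x else w x) = ∑ x, f x * w x + η * (f s * w s) := by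
  have hsplit : ∀ x, f x * (if x = s then (1 + η) * w x else w x)
      = f x * w x + if x = s then η * (f x * w x) else 0 := by
    intro x
    split_ifs <;> ring
  simp only [hsplit, sum_add_distrib, sum_ite_eq', mem_univ, if_true]

lemma escape_ratio_le {R Rσ S c : ℝ} (hR : 0 < R) (hRRσ : R ≤ Rσ) (hS : 0 ≤ S) (hc : 0 < c) :
    Rσ⁻¹ * (Rσ ^ 2 * c + (S + c * R ^ 2)) / (Rσ * c) ≤ 2 + R⁻¹ * S / (c * R) := by
  have hRσ : 0 < Rσ := hR.trans_le hRRσ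
  have hsplit : Rσ⁻¹ * (Rσ ^ 2 * c + (S + c * R ^ 2)) / (Rσ * c)
      = 1 + S / (Rσ ^ 2 * c) + (R / Rσ) ^ 2 := by
    field_simp
    ring
  have hET : R⁻¹ * S / (c * R) = S / (R ^ 2 * c) := by
    field_simp
  have hsum_term : S / (Rσ ^ 2 * c) ≤ S / (R ^ 2 * c) := by
    gcongr
  have hratio : (R / Rσ) ^ 2 ≤ 1 :=
    pow_le_one₀ (div_nonneg hR.le hRσ.le) (div_le_one_of_le₀ hRRσ hRσ.le)
  linarith

theorem stmt10 {V : Type*} [Fintype V] [DecidableEq V] (s : V) (v d : V → ℝ)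
    (hd : ∀ x, 0 < d x) (hR : 0 < v s) (η : ℝ) (hη : 1 ≤ η)
    (Rσ : ℝ) (hRσ : Rσ = v s + 1 / (η * d s))
    (dσ : ℝ) (hdσ : dσ = η * d s)
    (dhat : V → ℝ) (hdhat : dhat = fun x => if x = s then (1 + η) * d x else d x)
    (vhatσ : ℝ) (hvhatσ : vhatσ = Rσ)
    (ET ETσ : ℝ)
    (hET : ET = (v s)⁻¹ * ∑ x, v x ^ 2 * d x)
    (hETσ : ETσ = Rσ⁻¹ * (vhatσ ^ 2 * dσ + ∑ x, v x ^ 2 * dhat x)) :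
    Rσ * dσ = 1 + η * (v s * d s) ∧
    ETσ / (Rσ * dσ) ≤ 2 + ET / (η * (v s * d s)) := by
  have hc : 0 < η * d s := mul_pos (by linarith) (hd s)
  have hle : v s ≤ Rσ := hRσ ▸ le_add_of_nonneg_right (by positivity)
  have hS : 0 ≤ ∑ x, v x ^ 2 * d x := sum_nonneg fun x _ => by have := hd x; positivity
  have hsum : ∑ x, v x ^ 2 * dhat x = ∑ x, v x ^ 2 * d x + η * d s * v s ^ 2 := by
    rw [hdhat, sum_mul_ite_one_add_mul]
    ring
  refine ⟨by rw [hRσ, hdσ, add_mul, one_div, inv_mul_cancel₀ hc.ne']; ring, ?_⟩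
  have hbound := escape_ratio_le hR hle hS hc
  rwa [hETσ, hvhatσ, hsum, hET, hdσ, show η * (v s * d s) = η * d s * v s by ring]
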